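/- arXiv:2408.12573 — 3 statements merged into one kernel-verified Lean document; each statement's English description precedes it below -/
import Mathlib

section
/- Let λ, γ > 0 and let y : ℝ → ℝ be continuous. Suppose x̂₂ : ℝ → ℝ solves x̂₂'(t) = -λ x̂₂(t) + γ|y(t)| and a : ℝ → ℝ is differentiable with a(t) ≥ 0 and a'(t) ≤ -λ a(t) + γ|y(t)| for all t ≥ 0. Then a(t) ≤ |x̂₂(t)| + e^{-λt}(a(0) + |x̂₂(0)|) for all t ≥ 0. -/
/-! The forcing term `γ |y|` cancels in the difference `a - x̂₂`, which therefore satisfies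
`d' ≤ -λ d`; Grönwall gives `a - x̂₂ ≤ e^{-λt} (a(0) - x̂₂(0))`. -/

open Real

theorem le_mul_exp_of_deriv_le_mul {f : ℝ → ℝ} {K t : ℝ} (hf : Differentiable ℝ f)
    (hbound : ∀ s, 0 ≤ s → deriv f s ≤ K * f s) (ht : 0 ≤ t) :
    f t ≤ f 0 * exp (K * t) := by
  have h := le_gronwallBound_of_liminf_deriv_right_le (f' := deriv f) (ε := 0)
    hf.continuous.continuousOn
    (fun s _ _ hr => (hf s).hasDerivAt.hasDerivWithinAt.liminf_right_slope_le hr)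
    le_rfl (fun s hs => by simpa using hbound s hs.1) t ⟨ht, le_rfl⟩
  simpa [gronwallBound_ε0] using h

theorem sub_le_exp_mul_of_deriv_le {lam : ℝ} {u a x : ℝ → ℝ} (ha : Differentiable ℝ a)
    (hx : ∀ t, HasDerivAt x (-lam * x t + u t) t)
    (hda : ∀ t, 0 ≤ t → deriv a t ≤ -lam * a t + u t) {t : ℝ} (ht : 0 ≤ t) :
    a t - x t ≤ exp (-lam * t) * (a 0 - x 0) := by
  have hd : ∀ s, HasDerivAt (fun s => a s - x s) (deriv a s - (-lam * x s + u s)) s :=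
    fun s => (ha s).hasDerivAt.sub (hx s)
  have h := le_mul_exp_of_deriv_le_mul (f := fun s => a s - x s) (K := -lam)
    (fun s => (hd s).differentiableAt)
    (fun s hs => by rw [(hd s).deriv]; linarith [hda s hs]) ht
  simpa only [mul_comm] using h

theorem stmt1_general (lam γ : ℝ)
    (y : ℝ → ℝ)
    (xh2 a : ℝ → ℝ)
    (hxh : ∀ t, HasDerivAt xh2 (-lam * xh2 t + γ * |y t|) t)
    (ha : Differentiable ℝ a)
    (hda : ∀ t, 0 ≤ t → deriv a t ≤ -lam * a t + γ * |y t|) :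
    ∀ t, 0 ≤ t → a t ≤ |xh2 t| + Real.exp (-lam * t) * (a 0 + |xh2 0|) := by
  intro t ht
  have hcomp := sub_le_exp_mul_of_deriv_le ha hxh hda ht
  have hinit : a 0 - xh2 0 ≤ a 0 + |xh2 0| := by linarith [neg_abs_le (xh2 0)]
  have hexp := mul_le_mul_of_nonneg_left hinit (exp_pos (-lam * t)).le
  linarith [le_abs_self (xh2 t)]

theorem stmt1 (lam γ : ℝ) (hlam : 0 < lam) (hγ : 0 < γ)
    (y : ℝ → ℝ) (hy : Continuous y)
    (xh2 a : ℝ → ℝ)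
    (hxh : ∀ t, HasDerivAt xh2 (-lam * xh2 t + γ * |y t|) t)
    (ha : Differentiable ℝ a)
    (hapos : ∀ t, 0 ≤ t → 0 ≤ a t)
    (hda : ∀ t, 0 ≤ t → deriv a t ≤ -lam * a t + γ * |y t|) :
    ∀ t, 0 ≤ t → a t ≤ |xh2 t| + Real.exp (-lam * t) * (a 0 + |xh2 0|) :=
  stmt1_general lam γ y xh2 a hxh ha hda
end

section
/- Let σ, β_m, w_m, K > 0 and suppose x₂ : ℝ → ℝ solves x₂'(t) = -σ²β_m x₂(t) + (σ²β_m √w_m/√2) exp(-x₂(t)²/w_m) (x₁(t)/K) with 0 ≤ x₁(t) ≤ K. If |x₂(0)| ≤ √(w_m/2), then |x₂(t)| ≤ √(w_m/2) for all t ≥ 0. -/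
/-!
Write the equation as `x₂' = -a x₂ + b` with `a = σ²βₘ` and forcing `b`. Since `exp ≤ 1` and
`x₁/K ∈ [0, 1]`, the forcing satisfies `|b| ≤ a M` with `M = √(wₘ/2)`. For any constant `c` with
`b ≤ a c`, the function `e^{a s} (x₂ s - c)` has derivative `e^{a s} (b s - a c) ≤ 0`, so it cannot
become positive once it starts nonpositive; applied to `x₂` and to `-x₂` with `c = M` this keeps
`x₂` in `[-M, M]`.
-/

open Real Set

theorem le_of_hasDerivAt_eq_neg_mul_add {f b : ℝ → ℝ} {a c t : ℝ}
    (hf : ∀ s, 0 ≤ s → HasDerivAt f (-a * f s + b s) s) (hb : ∀ s, 0 ≤ s → b s ≤ a * c)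
    (h0 : f 0 ≤ c) (ht : 0 ≤ t) : f t ≤ c := by
  set φ : ℝ → ℝ := fun s => exp (a * s) * (f s - c)
  have hφ : ∀ s, 0 ≤ s → HasDerivAt φ (exp (a * s) * (b s - a * c)) s := fun s hs =>
    ((((hasDerivAt_id s).const_mul a).exp).mul ((hf s hs).sub_const c)).congr_deriv
      (by simp only [id]; ring)
  have hanti : AntitoneOn φ (Ici 0) := by
    apply antitoneOn_of_deriv_nonpos (convex_Ici 0)
      (fun s hs => (hφ s hs).continuousAt.continuousWithinAt)
    all_goals rw [interior_Ici]
    · exact fun s hs => (hφ s (le_of_lt hs)).differentiableAt.differentiableWithinAt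
    · intro s hs
      rw [(hφ s (le_of_lt hs)).deriv]
      exact mul_nonpos_of_nonneg_of_nonpos (exp_pos _).le (sub_nonpos.2 (hb s (le_of_lt hs)))
  have hφt : φ t ≤ 0 := calc
    φ t ≤ φ 0 := hanti (mem_Ici.2 le_rfl) ht ht
    _ = f 0 - c := by simp [φ]
    _ ≤ 0 := sub_nonpos.2 h0
  exact sub_nonpos.1 (nonpos_of_mul_nonpos_right hφt (exp_pos _))

theorem abs_le_of_hasDerivAt_eq_neg_mul_add {f b : ℝ → ℝ} {a M t : ℝ}
    (hf : ∀ s, 0 ≤ s → HasDerivAt f (-a * f s + b s) s) (hb : ∀ s, 0 ≤ s → |b s| ≤ a * M)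
    (h0 : |f 0| ≤ M) (ht : 0 ≤ t) : |f t| ≤ M := by
  have hupper : f t ≤ M :=
    le_of_hasDerivAt_eq_neg_mul_add hf (fun s hs => (le_abs_self _).trans (hb s hs))
      (abs_le.1 h0).2 ht
  have hlower : -f t ≤ M :=
    le_of_hasDerivAt_eq_neg_mul_add (f := -f) (b := -b)
      (fun s hs => (hf s hs).neg.congr_deriv (by simp only [Pi.neg_apply]; ring))
      (fun s hs => (neg_le_abs _).trans (hb s hs)) (by simpa only [Pi.neg_apply] using neg_le.1 (abs_le.1 h0).1) ht
  exact abs_le.2 ⟨neg_le.1 hlower, hupper⟩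

theorem abs_mul_exp_neg_sq_div_mul_div_le {c w K y z : ℝ} (hc : 0 ≤ c) (hw : 0 ≤ w) (hK : 0 < K)
    (hz : 0 ≤ z ∧ z ≤ K) :
    |c * √w / √2 * exp (-y ^ 2 / w) * (z / K)| ≤ c * √(w / 2) := by
  have hexp : exp (-y ^ 2 / w) ≤ 1 :=
    exp_le_one_iff.2 (div_nonpos_of_nonpos_of_nonneg (neg_nonpos.2 (sq_nonneg y)) hw)
  have hratio : z / K ≤ 1 := div_le_one_of_le₀ hz.2 hK.le
  rw [mul_div_assoc, ← sqrt_div' w zero_le_two,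
    abs_of_nonneg (by have := hz.1; positivity)]
  calc c * √(w / 2) * exp (-y ^ 2 / w) * (z / K) ≤ c * √(w / 2) * 1 * 1 := by
        gcongr
        exact div_nonneg hz.1 hK.le
    _ = c * √(w / 2) := by ring

theorem stmt7_general (σ βm wm K : ℝ) (hβ : 0 < βm) (hw : 0 < wm) (hK : 0 < K)
    (x₁ x₂ : ℝ → ℝ)
    (hx₁ : ∀ t, 0 ≤ x₁ t ∧ x₁ t ≤ K)
    (hx₂ : ∀ t, HasDerivAt x₂
      (-σ^2 * βm * x₂ t + (σ^2 * βm * Real.sqrt wm / Real.sqrt 2) *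
        Real.exp (-(x₂ t)^2 / wm) * (x₁ t / K)) t)
    (h0 : |x₂ 0| ≤ Real.sqrt (wm / 2)) :
    ∀ t, 0 ≤ t → |x₂ t| ≤ Real.sqrt (wm / 2) := by
  intro t ht
  exact abs_le_of_hasDerivAt_eq_neg_mul_add (a := σ ^ 2 * βm)
    (b := fun s => σ ^ 2 * βm * √wm / √2 * exp (-x₂ s ^ 2 / wm) * (x₁ s / K))
    (fun s _ => by simpa only [neg_mul] using hx₂ s)
    (fun s _ => abs_mul_exp_neg_sq_div_mul_div_le (by positivity) hw.le hK (hx₁ s)) h0 ht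

theorem stmt7 (σ βm wm K : ℝ) (hσ : 0 < σ) (hβ : 0 < βm) (hw : 0 < wm) (hK : 0 < K)
    (x₁ x₂ : ℝ → ℝ)
    (hx₁ : ∀ t, 0 ≤ x₁ t ∧ x₁ t ≤ K)
    (hx₂ : ∀ t, HasDerivAt x₂
      (-σ^2 * βm * x₂ t + (σ^2 * βm * Real.sqrt wm / Real.sqrt 2) *
        Real.exp (-(x₂ t)^2 / wm) * (x₁ t / K)) t)
    (h0 : |x₂ 0| ≤ Real.sqrt (wm / 2)) :
    ∀ t, 0 ≤ t → |x₂ t| ≤ Real.sqrt (wm / 2) :=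
  stmt7_general σ βm wm K hβ hw hK x₁ x₂ hx₁ hx₂ h0
end

section
/- Let r₀, K, β_m, β_d > 0, and let x₁, x₂ : ℝ → ℝ with 0 ≤ x₁(t) ≤ K. Suppose y(t) = x₁(t) satisfies y'(t) = (r₀ y(t)/K + β_m x₂(t) e^{-x₂(t)²/w_m} - β_d u(t)) y(t)(1 - y(t)/K). If constants r̄₀ > r₀/K, β̄_m > β_m, β_d_low ∈ (0, β_d), and a bound |x₂(t)| ≤ b(t) hold, then under the control u(t) = (r̄₀ y(t) + β̄_m b(t) + η)/β_d_low with η > 0, one has d/dt(y(t)²) ≤ 2 y(t)² (1 - y(t)/K)(β̄_m(b(t) - b(t)) - η) = -2η y(t)²(1 - y(t)/K) ≤ 0 for all t ≥ 0. -/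
open Real

/-! The feedback `u` is chosen so that `β_d u` dominates each destabilising term of the growth
rate: `β_d u ≥ β_d_low u = r̄₀ y + β̄_m b + η`, while `r₀ y / K ≤ r̄₀ y` and
`β_m x₂ e^{-x₂²/w_m} ≤ β_m |x₂| ≤ β̄_m b`. Hence the growth rate is at most `-η`, and since
`y² (1 - y/K) ≥ 0` on `[0, K]`, the chain rule gives `(y²)' ≤ -2η y² (1 - y/K) ≤ 0`. -/

lemma mul_exp_neg_sq_div_le_abs {w : ℝ} (hw : 0 ≤ w) (x : ℝ) :
    x * exp (-x ^ 2 / w) ≤ |x| := by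
  have hexp_le_one : exp (-x ^ 2 / w) ≤ 1 :=
    exp_le_one_iff.mpr (div_nonpos_of_nonpos_of_nonneg (neg_nonpos.mpr (sq_nonneg x)) hw)
  calc x * exp (-x ^ 2 / w) ≤ |x| * exp (-x ^ 2 / w) :=
        mul_le_mul_of_nonneg_right (le_abs_self x) (exp_pos _).le
    _ ≤ |x| := mul_le_of_le_one_right (abs_nonneg x) hexp_le_one

lemma one_sub_div_nonneg_of_le {y K : ℝ} (hK : 0 < K) (hy : y ≤ K) : 0 ≤ 1 - y / K :=
  sub_nonneg.mpr ((div_le_one hK).mpr hy)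

lemma growth_rate_le_neg {r₀ K βm βd wm rbar0 βbarm βdl η y x b u : ℝ}
    (hwm : 0 ≤ wm) (hβm : 0 ≤ βm) (hy : 0 ≤ y) (hrbar0 : r₀ / K ≤ rbar0)
    (hβbarm : βm ≤ βbarm) (hβdl : βdl ≤ βd) (hx : |x| ≤ b) (hu0 : 0 ≤ u)
    (hu : βdl * u = rbar0 * y + βbarm * b + η) :
    r₀ * y / K + βm * x * exp (-x ^ 2 / wm) - βd * u ≤ -η := by
  have hlogistic : r₀ * y / K ≤ rbar0 * y := by
    rw [mul_div_right_comm]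
    exact mul_le_mul_of_nonneg_right hrbar0 hy
  have hmigration : βm * x * exp (-x ^ 2 / wm) ≤ βbarm * b :=
    calc βm * x * exp (-x ^ 2 / wm) = βm * (x * exp (-x ^ 2 / wm)) := mul_assoc _ _ _
      _ ≤ βm * |x| := mul_le_mul_of_nonneg_left (mul_exp_neg_sq_div_le_abs hwm x) hβm
      _ ≤ βbarm * b := mul_le_mul hβbarm hx (abs_nonneg x) (hβm.trans hβbarm)
  have hcontrol : βdl * u ≤ βd * u := mul_le_mul_of_nonneg_right hβdl hu0
  linarith

lemma deriv_sq_le_of_hasDerivAt_logistic {y : ℝ → ℝ} {t g K η : ℝ}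
    (hy : HasDerivAt y (g * (y t * (1 - y t / K))) t) (hg : g ≤ -η)
    (hK : 0 ≤ 1 - y t / K) :
    deriv (fun s => y s ^ 2) t ≤ -2 * η * y t ^ 2 * (1 - y t / K) := by
  have hsq : HasDerivAt (fun s => y s ^ 2) (2 * g * (y t ^ 2 * (1 - y t / K))) t :=
    (hy.fun_pow 2).congr_deriv (by push_cast; ring)
  rw [hsq.deriv]
  nlinarith [mul_le_mul_of_nonneg_right hg (mul_nonneg (sq_nonneg (y t)) hK)]

theorem stmt9_general (r₀ K βm βd wm : ℝ) (hr₀ : 0 < r₀) (hK : 0 < K) (hβm : 0 < βm)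
    (hwm : 0 < wm)
    (x₁ x₂ y u b : ℝ → ℝ) (hyx : y = x₁)
    (hx₁b : ∀ t, 0 ≤ x₁ t ∧ x₁ t ≤ K)
    (rbar0 βbarm βdl η : ℝ)
    (hrbar0 : rbar0 > r₀ / K) (hβbarm : βbarm > βm) (hβdl0 : 0 < βdl) (hβdl : βdl < βd)
    (hη : 0 < η)
    (hb : ∀ t, 0 ≤ t → |x₂ t| ≤ b t)
    (hu : ∀ t, u t = (rbar0 * y t + βbarm * b t + η) / βdl)
    (hy : ∀ t, HasDerivAt y
      ((r₀ * y t / K + βm * x₂ t * Real.exp (-(x₂ t)^2 / wm) - βd * u t) *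
        (y t * (1 - y t / K))) t) :
    ∀ t, 0 ≤ t →
      deriv (fun s => (y s)^2) t ≤ -2 * η * (y t)^2 * (1 - y t / K) ∧
      -2 * η * (y t)^2 * (1 - y t / K) ≤ 0 := by
  intro t ht
  subst hyx
  obtain ⟨hy0, hyK⟩ := hx₁b t
  have hbt : 0 ≤ b t := (abs_nonneg _).trans (hb t ht)
  have hrbar0_nonneg : 0 ≤ rbar0 := (div_pos hr₀ hK).le.trans hrbar0.le
  have hcontrol : βdl * u t = rbar0 * y t + βbarm * b t + η := by
    rw [hu t]; field_simp
  have hu0 : 0 ≤ u t := by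
    rw [hu t]
    have hβbarm_b := mul_nonneg (hβm.le.trans hβbarm.le) hbt
    exact div_nonneg (by nlinarith) hβdl0.le
  have hKy := one_sub_div_nonneg_of_le hK hyK
  refine ⟨deriv_sq_le_of_hasDerivAt_logistic (hy t)
    (growth_rate_le_neg hwm.le hβm.le hy0 hrbar0.le hβbarm.le hβdl.le (hb t ht) hu0 hcontrol)
    hKy, ?_⟩
  nlinarith [mul_nonneg (mul_nonneg hη.le (sq_nonneg (y t))) hKy]

theorem stmt9 (r₀ K βm βd wm : ℝ) (hr₀ : 0 < r₀) (hK : 0 < K) (hβm : 0 < βm)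
    (hβd : 0 < βd) (hwm : 0 < wm)
    (x₁ x₂ y u b : ℝ → ℝ) (hyx : y = x₁)
    (hx₁b : ∀ t, 0 ≤ x₁ t ∧ x₁ t ≤ K)
    (rbar0 βbarm βdl η : ℝ)
    (hrbar0 : rbar0 > r₀ / K) (hβbarm : βbarm > βm) (hβdl0 : 0 < βdl) (hβdl : βdl < βd)
    (hη : 0 < η)
    (hb : ∀ t, 0 ≤ t → |x₂ t| ≤ b t)
    (hu : ∀ t, u t = (rbar0 * y t + βbarm * b t + η) / βdl)
    (hy : ∀ t, HasDerivAt y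
      ((r₀ * y t / K + βm * x₂ t * Real.exp (-(x₂ t)^2 / wm) - βd * u t) *
        (y t * (1 - y t / K))) t) :
    ∀ t, 0 ≤ t →
      deriv (fun s => (y s)^2) t ≤ -2 * η * (y t)^2 * (1 - y t / K) ∧
      -2 * η * (y t)^2 * (1 - y t / K) ≤ 0 :=
  stmt9_general r₀ K βm βd wm hr₀ hK hβm hwm x₁ x₂ y u b hyx hx₁b rbar0 βbarm βdl η hrbar0 hβbarm
    hβdl0 hβdl hη hb hu hy
end
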